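/- Let E be a finite-dimensional real normed algebra containing a subring 𝓔 that is a free Z-module of rank t with basis τ₁,...,τ_t, and assume λ := min{|a| : a ∈ 𝓔, a ≠ 0} > 0. Then there is a constant C > 0 (depending only on 𝓔, τ, n) and an integer Q₀ ≥ 2 (depending only on 𝓔) such that for every integer Q ≥ Q₀ and every nonzero vector ā = (a₁,...,a_n) ∈ 𝓔^n there exist an integer b and a vector b̄ = (b₁,...,b_n) ∈ 𝓔^n satisfying: (i) 1 ≤ b < Q^{nt}; (ii) |b̄| ≤ C·b and b ≤ C·|b̄|; (iii) |ā/|ā| − b̄/b| ≤ C/(Q·b), where |ā| denotes the maximum of the norms |a_i|. -/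

import Mathlib

/-!
Write the unit vector `u = ā / |ā|` in real coordinates with respect to `τ`. Dirichlet's
simultaneous approximation theorem (pigeonhole on the fractional parts of `j • u`,
`0 ≤ j ≤ M^(nt)`, in a grid of `M^(nt)` boxes, with `M = Q - 1`) gives `1 ≤ b ≤ M^(nt)` and
integer coordinates of some `b̄ ∈ 𝓔^n` with `|b u - b̄| ≤ S / M`, where `S = ∑ ‖τ_j‖`.
Since `|u| = 1`, once `S / M ≤ 1/2` the norm `|b̄|` is within `1/2` of `b`, and dividing by `b`
gives (iii); the constants `C = 2S + 2`, `Q₀ = ⌈2S⌉ + 2` make both estimates work.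
-/

open Finset

theorem Real.exists_nat_forall_abs_mul_sub_le {ι : Type*} [Fintype ι] (x : ι → ℝ) {M : ℕ}
    (hM : 0 < M) :
    ∃ q : ℕ, 1 ≤ q ∧ q ≤ M ^ Fintype.card ι ∧ ∃ p : ι → ℤ, ∀ k, |q * x k - p k| ≤ 1 / M := by
  classical
  have hMR : (0 : ℝ) < M := mod_cast hM
  let f : ℕ → ι → ℤ := fun j k => ⌊Int.fract (j * x k) * M⌋
  have hf : ∀ j ∈ range (M ^ Fintype.card ι + 1), f j ∈ Fintype.piFinset fun _ => Ico 0 (M : ℤ) :=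
    fun j _ => Fintype.mem_piFinset.2 fun k => mem_Ico.2
      ⟨Int.floor_nonneg.2 (by positivity), Int.floor_lt.2 (by
        push_cast; exact mul_lt_of_lt_one_left hMR (Int.fract_lt_one _))⟩
  have hcard :
      #(Fintype.piFinset fun _ : ι => Ico 0 (M : ℤ)) < #(range (M ^ Fintype.card ι + 1)) := by
    simp
  obtain ⟨j₁, hj₁, j₂, hj₂, hne, heq⟩ := exists_ne_map_eq_of_card_lt_of_maps_to hcard hf
  wlog hlt : j₁ < j₂ generalizing j₁ j₂
  · exact this j₂ hj₂ j₁ hj₁ hne.symm heq.symm (by omega)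
  refine ⟨j₂ - j₁, by omega, by simp at hj₂; omega, fun k => ⌊j₂ * x k⌋ - ⌊j₁ * x k⌋, fun k => ?_⟩
  have hclose := Int.abs_sub_lt_one_of_floor_eq_floor (congrFun heq k).symm
  rw [← sub_mul, abs_mul, abs_of_pos hMR, ← lt_div_iff₀ hMR] at hclose
  calc |((j₂ - j₁ : ℕ) : ℝ) * x k - ((⌊j₂ * x k⌋ - ⌊j₁ * x k⌋ : ℤ) : ℝ)|
      = |Int.fract (j₂ * x k) - Int.fract (j₁ * x k)| := by
        push_cast [Nat.cast_sub hlt.le]; simp only [Int.fract]; ring_nf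
    _ ≤ 1 / M := hclose.le

theorem norm_sum_smul_le_of_abs_le {κ V : Type*} [Fintype κ] [SeminormedAddCommGroup V]
    [NormedSpace ℝ V] (τ : κ → V) {c : κ → ℝ} {δ : ℝ} (hc : ∀ j, |c j| ≤ δ) :
    ‖∑ j, c j • τ j‖ ≤ δ * ∑ j, ‖τ j‖ :=
  calc ‖∑ j, c j • τ j‖ ≤ ∑ j, |c j| * ‖τ j‖ := by
        simpa only [norm_smul, Real.norm_eq_abs] using norm_sum_le univ fun j => c j • τ j
    _ ≤ δ * ∑ j, ‖τ j‖ := by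
        rw [mul_sum]; exact sum_le_sum fun j _ => by gcongr; exact hc j

theorem exists_nat_norm_smul_sub_sum_zsmul_le {ι κ V : Type*} [Fintype ι] [Fintype κ]
    [SeminormedAddCommGroup V] [NormedSpace ℝ V] (τ : κ → V) (x : ι → κ → ℝ) {M : ℕ}
    (hM : 0 < M) :
    ∃ q : ℕ, 1 ≤ q ∧ q ≤ M ^ (Fintype.card ι * Fintype.card κ) ∧ ∃ p : ι → κ → ℤ,
      ‖(q : ℝ) • (fun i => ∑ j, x i j • τ j) - fun i => ∑ j, p i j • τ j‖ ≤
        (∑ j, ‖τ j‖) / M := by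
  obtain ⟨q, hq1, hqM, p, hp⟩ :=
    Real.exists_nat_forall_abs_mul_sub_le (fun k : ι × κ => x k.1 k.2) hM
  rw [Fintype.card_prod] at hqM
  refine ⟨q, hq1, hqM, fun i j => p (i, j),
    (pi_norm_le_iff_of_nonneg (by positivity)).2 fun i => ?_⟩
  have hcomp : (q : ℝ) • ∑ j, x i j • τ j - ∑ j, p (i, j) • τ j
      = ∑ j, ((q : ℝ) * x i j - p (i, j)) • τ j := by
    simp only [smul_sum, smul_smul, ← Int.cast_smul_eq_zsmul ℝ, ← sum_sub_distrib, sub_smul]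
  rw [Pi.sub_apply, Pi.smul_apply, hcomp, div_eq_inv_mul, ← one_div]
  exact norm_sum_smul_le_of_abs_le τ fun j => hp (i, j)

theorem abs_norm_sub_le_norm_smul_sub {V : Type*} [SeminormedAddCommGroup V] [NormedSpace ℝ V]
    {u : V} (hu : ‖u‖ = 1) {q : ℝ} (hq : 0 ≤ q) (v : V) : |‖v‖ - q| ≤ ‖q • u - v‖ := by
  simpa [abs_sub_comm, norm_smul, hu, abs_of_nonneg hq] using abs_norm_sub_norm_le (q • u) v

theorem norm_sub_inv_smul_eq {V : Type*} [SeminormedAddCommGroup V] [NormedSpace ℝ V]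
    (u v : V) {q : ℝ} (hq : 0 < q) : ‖u - q⁻¹ • v‖ = ‖q • u - v‖ / q := by
  rw [eq_div_iff hq.ne', mul_comm, ← norm_smul_of_nonneg hq.le, smul_sub, smul_inv_smul₀ hq.ne']

theorem div_sub_one_le_of_ceil_add_two_le {S : ℝ} (hS : 0 ≤ S) {Q : ℕ} (hQ : ⌈2 * S⌉₊ + 2 ≤ Q) :
    S / (Q - 1 : ℕ) ≤ 1 / 2 ∧ S / (Q - 1 : ℕ) ≤ (2 * S + 2) / Q := by
  have h2S : 2 * S + 2 ≤ Q := by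
    have := Nat.le_ceil (2 * S); have : ((⌈2 * S⌉₊ + 2 : ℕ) : ℝ) ≤ Q := mod_cast hQ
    push_cast at this; linarith
  have hQ1 : ((Q - 1 : ℕ) : ℝ) = Q - 1 := by rw [Nat.cast_sub (by omega), Nat.cast_one]
  rw [hQ1, div_le_div_iff₀ (by linarith) two_pos, div_le_div_iff₀ (by linarith) (by linarith)]
  constructor <;> nlinarith

theorem stmt_2_general {E : Type*} [NormedRing E] [NormedAlgebra ℝ E]
    (𝓔 : Subring E) {t : ℕ} (τ : Fin t → E)
    (hτmem : ∀ j, τ j ∈ 𝓔)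
    (hspan : ∀ a ∈ 𝓔, ∃ α : Fin t → ℤ, a = ∑ j, α j • τ j)
    (n : ℕ) :
    ∃ (C : ℝ) (Q₀ : ℕ), 0 < C ∧ 2 ≤ Q₀ ∧
      ∀ Q : ℕ, Q₀ ≤ Q →
        ∀ a : Fin n → E, (∀ i, a i ∈ 𝓔) → a ≠ 0 →
          ∃ (b : ℕ) (bb : Fin n → E), (∀ i, bb i ∈ 𝓔) ∧
            1 ≤ b ∧ b < Q ^ (n * t) ∧
            ‖bb‖ ≤ C * b ∧ (b : ℝ) ≤ C * ‖bb‖ ∧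
            ‖‖a‖⁻¹ • a - (b : ℝ)⁻¹ • bb‖ ≤ C / (Q * b) := by
  set S := ∑ j, ‖τ j‖
  have hS : 0 ≤ S := sum_nonneg fun j _ => norm_nonneg _
  refine ⟨2 * S + 2, ⌈2 * S⌉₊ + 2, by positivity, by omega, fun Q hQ a ha ha0 => ?_⟩
  choose α hα using fun i => hspan (a i) (ha i)
  have hnt : n * t ≠ 0 := by
    refine fun h => ha0 (funext fun i => ?_)
    rcases Nat.mul_eq_zero.1 h with rfl | rfl
    exacts [i.elim0, by simp [hα i]]
  have hu : ‖a‖⁻¹ • a = fun i => ∑ j, (‖a‖⁻¹ * α i j) • τ j := by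
    ext i; simp only [Pi.smul_apply, hα i, smul_sum, mul_smul, Int.cast_smul_eq_zsmul]
  obtain ⟨q, hq1, hqQ, p, hp⟩ := exists_nat_norm_smul_sub_sum_zsmul_le τ
    (fun i j => ‖a‖⁻¹ * α i j) (M := Q - 1) (by omega)
  set bb : Fin n → E := fun i => ∑ j, p i j • τ j
  rw [← hu] at hp
  rw [Fintype.card_fin, Fintype.card_fin] at hqQ
  obtain ⟨hhalf, hC⟩ := div_sub_one_le_of_ceil_add_two_le hS hQ
  have hq : (1 : ℝ) ≤ q := mod_cast hq1
  have hbb := abs_le.1 <| (abs_norm_sub_le_norm_smul_sub (norm_smul_inv_norm ha0)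
    (by positivity) bb).trans (hp.trans hhalf)
  refine ⟨q, bb, fun i => sum_mem fun j _ => Subring.zsmul_mem _ (hτmem j) _, hq1,
    hqQ.trans_lt (Nat.pow_lt_pow_left (by omega) hnt), by nlinarith, by nlinarith, ?_⟩
  rw [norm_sub_inv_smul_eq _ _ (by positivity), ← div_div]
  gcongr
  exact hp.trans hC

/-- Let `E` be a finite-dimensional real normed algebra containing a
subring `𝓔` which is a free `ℤ`-module of rank `t` with basis `τ₁, …, τ_t`, and assume
`λ := min {‖a‖ : a ∈ 𝓔, a ≠ 0} > 0`.  Then there are a constant `C > 0` and an integer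
`Q₀ ≥ 2` such that for every integer `Q ≥ Q₀` and every nonzero `ā = (a₁, …, a_n) ∈ 𝓔^n`
there exist an integer `b` and `b̄ = (b₁, …, b_n) ∈ 𝓔^n` with
(i) `1 ≤ b < Q^{nt}`; (ii) `|b̄| ≤ C·b` and `b ≤ C·|b̄|`;
(iii) `|ā/|ā| − b̄/b| ≤ C/(Q·b)`, where `|ā| = max_i ‖a_i‖` (the sup norm on `E^n`). -/
theorem stmt_2 {E : Type*} [NormedRing E] [NormedAlgebra ℝ E] [FiniteDimensional ℝ E]
    (𝓔 : Subring E) {t : ℕ} (τ : Fin t → E)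
    (hτmem : ∀ j, τ j ∈ 𝓔)
    (hspan : ∀ a ∈ 𝓔, ∃ α : Fin t → ℤ, a = ∑ j, α j • τ j)
    (hind : LinearIndependent ℤ τ)
    (lam : ℝ) (hlam : 0 < lam)
    (hmin : ∀ a ∈ 𝓔, a ≠ 0 → lam ≤ ‖a‖)
    (hmin' : ∃ a ∈ 𝓔, a ≠ 0 ∧ ‖a‖ = lam)
    (n : ℕ) (hn : 0 < n) :
    ∃ (C : ℝ) (Q₀ : ℕ), 0 < C ∧ 2 ≤ Q₀ ∧
      ∀ Q : ℕ, Q₀ ≤ Q →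
        ∀ a : Fin n → E, (∀ i, a i ∈ 𝓔) → a ≠ 0 →
          ∃ (b : ℕ) (bb : Fin n → E), (∀ i, bb i ∈ 𝓔) ∧
            1 ≤ b ∧ b < Q ^ (n * t) ∧
            ‖bb‖ ≤ C * b ∧ (b : ℝ) ≤ C * ‖bb‖ ∧
            ‖‖a‖⁻¹ • a - (b : ℝ)⁻¹ • bb‖ ≤ C / (Q * b) :=
  stmt_2_general 𝓔 τ hτmem hspan n
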